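/- In the polynomial ring A = K[a_1,…,a_n,b_1,…,b_n], the determinant of the matrix C factors as det C = (∏_{u non-periodic} a_{i(u)}) · ∏_{O} (∏_{i=1}^n a_i^{r_i(O)} − ∏_{i=1}^n b_i^{r_i(O)}), where the first product is over all monic degree-d monomials u that are not periodic under σ, and the second product is over all σ-orbits O of periodic monomials (i.e., over all directed cycles of the reduction graph G_{B,d}). -/

import Mathlib

open Equiv Finset Matrix



open Fin.NatCast in
lemma perm_step {k : ℕ} (σ : Equiv.Perm (Fin (k+2)))
    (h : ∀ i, σ i = i ∨ σ i = i + 1) : σ = Equiv.refl _ ∨ σ = finRotate (k+2) := by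
  by_cases hid : σ = Equiv.refl _
  · exact Or.inl hid
  · right
    obtain ⟨i₀, hi₀⟩ : ∃ i, σ i ≠ i := by
      by_contra hc; push_neg at hc; exact hid (Equiv.ext fun i => hc i)
    have hi₀' : σ i₀ = i₀ + 1 := (h i₀).resolve_left hi₀
    have key : ∀ t : ℕ, σ (i₀ + (t : Fin (k+2))) = i₀ + (t : Fin (k+2)) + 1 := by
      intro t
      induction t with
      | zero => simpa using hi₀'
      | succ t ih =>
        have hcast : ((t+1 : ℕ) : Fin (k+2)) = (t : Fin (k+2)) + 1 := by
          push_cast; ring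
        rw [hcast]
        rcases h (i₀ + ((t : Fin (k+2)) + 1)) with h1 | h1
        · exfalso
          have : i₀ + ((t : Fin (k+2)) + 1) = i₀ + (t : Fin (k+2)) := by
            apply σ.injective
            rw [h1, ih, add_assoc]
          have h2 : ((t : Fin (k+2)) + 1) = (t : Fin (k+2)) := add_left_cancel this
          exact one_ne_zero (add_eq_left.mp h2)
        · exact h1
    apply Equiv.ext
    intro i
    rw [finRotate_succ_apply]
    have := key ((i - i₀ : Fin (k+2)).val)
    rwa [Fin.cast_val_eq_self, add_sub_cancel] at this

lemma cycleDet {R : Type*} [CommRing R] (k : ℕ) (a b : Fin (k+2) → R) :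
    (Matrix.of fun i j : Fin (k+2) =>
        (if j = i then a i else 0) + (if j = i + 1 then -(b i) else 0)).det
      = ∏ i, a i - ∏ i, b i := by
  set M := (Matrix.of fun i j : Fin (k+2) =>
        (if j = i then a i else 0) + (if j = i + 1 then -(b i) else 0))
  have self_ne : ∀ i : Fin (k+2), i + 1 ≠ i := by
    intro i h
    exact one_ne_zero (add_eq_left.mp h)
  have hMd : ∀ i, M i i = a i := by intro i; simp [M, (self_ne i)]
  have hMs : ∀ i, M i (i+1) = -(b i) := by
    intro i; simp [M, (self_ne i)]
  have hM0 : ∀ i j, j ≠ i → j ≠ i + 1 → M i j = 0 := by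
    intro i j h1 h2; simp [M, h1, h2]
  have hdet : M.det = Mᵀ.det := (Matrix.det_transpose M).symm
  rw [hdet, Matrix.det_apply']
  have hrot_ne : (Equiv.refl (Fin (k+2))) ≠ finRotate (k+2) := by
    intro h
    have := congrArg (fun σ : Equiv.Perm (Fin (k+2)) => σ 0) h
    simp only [Equiv.refl_apply, finRotate_succ_apply, zero_add] at this
    exact one_ne_zero this.symm
  have hsub : ({Equiv.refl (Fin (k+2)), finRotate (k+2)} : Finset (Equiv.Perm (Fin (k+2)))) ⊆ univ :=
    subset_univ _
  rw [← Finset.sum_subset hsub]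
  · rw [Finset.sum_pair hrot_ne]
    have t1 : ((Equiv.Perm.sign (Equiv.refl (Fin (k+2)))) : R) * ∏ i, Mᵀ ((Equiv.refl _) i) i
        = ∏ i, a i := by
      simp [Matrix.transpose_apply, hMd]
    have t2 : ((Equiv.Perm.sign (finRotate (k+2))) : R) * ∏ i, Mᵀ ((finRotate (k+2)) i) i
        = - ∏ i, b i := by
      have hsign : ((Equiv.Perm.sign (finRotate (k+2))) : R) = (-1)^(k+1) := by
        rw [sign_finRotate]; simp
      have hprod : ∏ i, Mᵀ ((finRotate (k+2)) i) i = (-1)^(k+2) * ∏ i, b i := by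
        calc ∏ i, Mᵀ ((finRotate (k+2)) i) i = ∏ i, -(b i) := by
              apply Finset.prod_congr rfl
              intro i _
              rw [Matrix.transpose_apply, finRotate_succ_apply, hMs]
          _ = ∏ i, (-1 : R) * b i := by simp
          _ = (∏ _i : Fin (k+2), (-1:R)) * ∏ i, b i := Finset.prod_mul_distrib
          _ = (-1)^(k+2) * ∏ i, b i := by simp
      rw [hsign, hprod, ← mul_assoc, ← pow_add]
      have : (-1 : R)^(k+1+(k+2)) = -1 := by
        have : k+1+(k+2) = 2*(k+1)+1 := by ring
        rw [this, pow_succ, pow_mul]; simp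
      rw [this]; ring
    rw [t1, t2]; ring
  · intro σ _ hσ
    have : ¬ (∀ i, σ i = i ∨ σ i = i + 1) := by
      intro hall
      rcases perm_step σ hall with h | h <;> simp [h] at hσ
    push_neg at this
    obtain ⟨i, h1, h2⟩ := this
    have : Mᵀ (σ i) i = 0 := by
      rw [Matrix.transpose_apply]; exact hM0 i (σ i) h1 h2
    exact mul_eq_zero_of_right _ (Finset.prod_eq_zero (Finset.mem_univ i) this)

section Abstract

set_option linter.unusedSectionVars false
variable {V : Type*} [DecidableEq V] {R : Type*} [CommRing R]

def PerF (f : V → V) (α : V) : Prop := ∃ ℓ : ℕ, 1 ≤ ℓ ∧ f^[ℓ] α = α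

open Classical in
noncomputable def orbF (s : Finset V) (f : V → V) (α : V) : Finset V :=
  s.filter (fun w => ∃ t : ℕ, f^[t] α = w)

open Classical in
noncomputable def cyclesF (s : Finset V) (f : V → V) : Finset (Finset V) :=
  (s.filter (PerF f)).image (orbF s f)

noncomputable def MdetM (s : Finset V) (f : V → V) (a b : V → R) : Matrix ↥s ↥s R :=
  Matrix.of fun u w =>
    (if (w : V) = (u : V) then a (u : V) else 0) +
      (if (w : V) = f (u : V) then -(b (u : V)) else 0)

lemma perF_iterate {f : V → V} {v : V} (h : PerF f v) (t : ℕ) : PerF f (f^[t] v) := by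
  obtain ⟨ℓ, hℓ, hfix⟩ := h
  exact ⟨ℓ, hℓ, by rw [← Function.iterate_add_apply, add_comm, Function.iterate_add_apply, hfix]⟩

lemma perF_reach_symm {f : V → V} {v w : V} (h : PerF f v) (t : ℕ) (hw : f^[t] v = w) :
    ∃ t' : ℕ, f^[t'] w = v := by
  obtain ⟨ℓ, hℓ, hfix⟩ := h
  refine ⟨ℓ * t - t, ?_⟩
  have ht : t ≤ ℓ * t := Nat.le_mul_of_pos_left t (by omega)
  have : f^[ℓ * t] v = v := by
    have : Function.IsPeriodicPt f (ℓ * t) v := (Function.IsPeriodicPt.mul_const hfix t)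
    exact this
  rw [← hw, ← Function.iterate_add_apply, Nat.sub_add_cancel ht, this]

lemma mem_orbF_self {s : Finset V} {f : V → V} {v : V} (hv : v ∈ s) : v ∈ orbF s f v := by
  classical
  exact Finset.mem_filter.mpr ⟨hv, ⟨0, rfl⟩⟩

lemma orbF_subset {s : Finset V} {f : V → V} {v : V} : orbF s f v ⊆ s := by
  classical
  exact Finset.filter_subset _ _

lemma mem_orbF_iff {s : Finset V} {f : V → V} {v w : V} :
    w ∈ orbF s f v ↔ w ∈ s ∧ ∃ t : ℕ, f^[t] v = w := by
  classical
  simp [orbF]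

lemma perF_of_mem_orbF {s : Finset V} {f : V → V} {v w : V} (hv : PerF f v)
    (hw : w ∈ orbF s f v) : PerF f w := by
  obtain ⟨-, t, rfl⟩ := mem_orbF_iff.mp hw
  exact perF_iterate hv t

lemma orbF_eq_of_mem {s : Finset V} {f : V → V} {v w : V} (hv : PerF f v)
    (hw : w ∈ orbF s f v) : orbF s f w = orbF s f v := by
  obtain ⟨hws, t, hwt⟩ := mem_orbF_iff.mp hw
  obtain ⟨t', hvt⟩ := perF_reach_symm hv t hwt
  ext u
  simp only [mem_orbF_iff]
  constructor
  · rintro ⟨hu, r, rfl⟩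
    exact ⟨hu, r + t, by rw [Function.iterate_add_apply, hwt]⟩
  · rintro ⟨hu, r, rfl⟩
    exact ⟨hu, r + t', by rw [Function.iterate_add_apply, hvt]⟩

lemma mem_orbF_of_reach {s : Finset V} {f : V → V} {v w : V} (hv : PerF f v)
    (hw : w ∈ orbF s f v) {u : V} (hu : u ∈ s) (t : ℕ) (ht : f^[t] w = u) :
    u ∈ orbF s f v := by
  obtain ⟨hws, r, hr⟩ := mem_orbF_iff.mp hw
  exact mem_orbF_iff.mpr ⟨hu, t + r, by rw [Function.iterate_add_apply, hr, ht]⟩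

lemma iterate_mem {s : Finset V} {f : V → V} (hmaps : ∀ v ∈ s, f v ∈ s) {v : V}
    (hv : v ∈ s) (t : ℕ) : f^[t] v ∈ s := by
  induction t with
  | zero => exact hv
  | succ t ih => rw [Function.iterate_succ_apply']; exact hmaps _ ih

/-- If on the complement of the orbit, stays there. -/
lemma sdiff_invariant {s : Finset V} {f : V → V} (hmaps : ∀ v ∈ s, f v ∈ s) {v : V}
    (hv : v ∈ s) (hper : PerF f v) {w : V} (hw : w ∈ s \ orbF s f v) (hwper : PerF f w) :
    f w ∈ s \ orbF s f v := by
  rw [Finset.mem_sdiff] at hw ⊢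
  refine ⟨hmaps _ hw.1, fun hfw => hw.2 ?_⟩
  -- f w ∈ orb v; then w reachable from f w, so w ∈ orb v
  obtain ⟨ℓ, hℓ, hfix⟩ := hwper
  have : f^[ℓ - 1] (f w) = w := by
    rw [← Function.iterate_succ_apply, Nat.succ_eq_add_one]
    have h1 : ℓ - 1 + 1 = ℓ := by omega
    rw [h1, hfix]
  exact mem_orbF_of_reach hper hfw hw.1 (ℓ - 1) this

/-- split a finset into a subset and its relative complement -/
def finsetSplit (s O : Finset V) (hO : O ⊆ s) : ↥O ⊕ ↥(s \ O) ≃ ↥s where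
  toFun := fun x => match x with
    | .inl w => ⟨w, hO w.2⟩
    | .inr w => ⟨w, (Finset.mem_sdiff.mp w.2).1⟩
  invFun := fun u =>
    if h : (u : V) ∈ O then .inl ⟨u, h⟩
    else .inr ⟨u, Finset.mem_sdiff.mpr ⟨u.2, h⟩⟩
  left_inv := by
    rintro (w | w)
    · simp
    · have : (w : V) ∉ O := (Finset.mem_sdiff.mp w.2).2
      simp [this]
  right_inv := by
    intro u
    by_cases h : (u : V) ∈ O <;> simp [h]

lemma orbF_eq_orbF_sdiff {s O : Finset V} {f : V → V} (hmaps : ∀ v ∈ s, f v ∈ s)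
    {v : V} (hv : v ∈ s) (hper : PerF f v) (hO : O = orbF s f v)
    {w : V} (hws : w ∈ s) (hwper : PerF f w) (hwO : w ∈ s \ O) :
    orbF (s \ O) f w = orbF s f w := by
  ext u
  simp only [mem_orbF_iff, Finset.mem_sdiff]
  constructor
  · rintro ⟨⟨hu, -⟩, t, rfl⟩
    exact ⟨hu, t, rfl⟩
  · rintro ⟨hu, t, rfl⟩
    refine ⟨⟨hu, fun huO => ?_⟩, t, rfl⟩
    -- u ∈ O and u reachable from w; then w ∈ O, contradiction
    subst hO
    obtain ⟨t', ht'⟩ := perF_reach_symm hwper t rfl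
    exact (Finset.mem_sdiff.mp hwO).2 (mem_orbF_of_reach hper huO hws t' ht')

lemma cyclesF_sdiff_orb {s : Finset V} {f : V → V} (hmaps : ∀ v ∈ s, f v ∈ s)
    {v : V} (hv : v ∈ s) (hper : PerF f v) :
    cyclesF s f = insert (orbF s f v) (cyclesF (s \ orbF s f v) f) := by
  classical
  set O := orbF s f v with hO
  ext X
  simp only [cyclesF, Finset.mem_insert, Finset.mem_image, Finset.mem_filter]
  constructor
  · rintro ⟨w, ⟨hws, hwper⟩, rfl⟩
    by_cases hwO : w ∈ O
    · exact Or.inl (orbF_eq_of_mem hper hwO)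
    · refine Or.inr ⟨w, ⟨Finset.mem_sdiff.mpr ⟨hws, hwO⟩, hwper⟩, ?_⟩
      exact orbF_eq_orbF_sdiff hmaps hv hper hO hws hwper (Finset.mem_sdiff.mpr ⟨hws, hwO⟩)
  · rintro (rfl | ⟨w, ⟨hws', hwper⟩, rfl⟩)
    · exact ⟨v, ⟨hv, hper⟩, rfl⟩
    · have hws : w ∈ s := (Finset.mem_sdiff.mp hws').1
      refine ⟨w, ⟨hws, hwper⟩, ?_⟩
      exact (orbF_eq_orbF_sdiff hmaps hv hper hO hws hwper hws').symm

lemma orb_not_mem_cyclesF_sdiff {s : Finset V} {f : V → V}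
    {v : V} (hv : v ∈ s) (hper : PerF f v) :
    orbF s f v ∉ cyclesF (s \ orbF s f v) f := by
  classical
  intro h
  simp only [cyclesF, Finset.mem_image, Finset.mem_filter] at h
  obtain ⟨w, -, hw⟩ := h
  have hvmem : v ∈ orbF (s \ orbF s f v) f w := hw.symm ▸ mem_orbF_self hv
  have := (Finset.mem_sdiff.mp (orbF_subset hvmem)).2
  exact this (mem_orbF_self hv)

lemma cycleBlockDet {s : Finset V} {f : V → V} (hmaps : ∀ v ∈ s, f v ∈ s)
    (hne : ∀ v ∈ s, f v ≠ v) {v : V} (hv : v ∈ s) (hper : PerF f v) (a b : V → R) :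
    (MdetM (orbF s f v) f a b).det
      = ∏ w ∈ orbF s f v, a w - ∏ w ∈ orbF s f v, b w := by
  classical
  set O := orbF s f v with hO
  have hmem : v ∈ Function.periodicPts f := by
    obtain ⟨n, hn, hfix⟩ := hper; exact ⟨n, by omega, hfix⟩
  have hℓpos : 0 < Function.minimalPeriod f v :=
    Function.minimalPeriod_pos_iff_mem_periodicPts.mpr hmem
  have hℓfix : f^[Function.minimalPeriod f v] v = v := Function.iterate_minimalPeriod
  have hℓne1 : Function.minimalPeriod f v ≠ 1 := by
    intro h1
    apply hne v hv
    rw [h1] at hℓfix; simpa using hℓfix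
  obtain ⟨k, hk⟩ : ∃ k, Function.minimalPeriod f v = k + 2 :=
    ⟨Function.minimalPeriod f v - 2, by omega⟩
  have hiter_mem : ∀ t : ℕ, f^[t] v ∈ O := fun t =>
    mem_orbF_iff.mpr ⟨iterate_mem hmaps hv t, t, rfl⟩
  have hinjval : ∀ i j : Fin (k+2), f^[(i:ℕ)] v = f^[(j:ℕ)] v → i = j := by
    intro i j hij
    have h1 : (i:ℕ) ∈ Set.Iio (Function.minimalPeriod f v) := by
      rw [hk]; exact i.isLt
    have h2 : (j:ℕ) ∈ Set.Iio (Function.minimalPeriod f v) := by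
      rw [hk]; exact j.isLt
    exact Fin.ext (Function.iterate_injOn_Iio_minimalPeriod h1 h2 hij)
  have hstep : ∀ i : Fin (k+2), f^[((i+1 : Fin (k+2)) : ℕ)] v = f (f^[(i:ℕ)] v) := by
    intro i
    have h1 : ((i+1 : Fin (k+2)) : ℕ) = ((i:ℕ) + 1) % Function.minimalPeriod f v := by
      rw [hk, Fin.val_add, Fin.val_one]
    rw [h1, Function.iterate_mod_minimalPeriod_eq, Function.iterate_succ_apply']
  have hbij : Function.Bijective (fun i : Fin (k+2) => (⟨f^[(i:ℕ)] v, hiter_mem i⟩ : ↥O)) := by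
    constructor
    · intro i j hij
      exact hinjval i j (congrArg Subtype.val hij)
    · intro w
      obtain ⟨hws, t, hwt⟩ := mem_orbF_iff.mp w.2
      refine ⟨⟨t % (k+2), Nat.mod_lt _ (by omega)⟩, ?_⟩
      apply Subtype.ext
      show f^[t % (k+2)] v = ↑w
      rw [← hk, Function.iterate_mod_minimalPeriod_eq, hwt]
  let e3 : Fin (k+2) ≃ ↥O := Equiv.ofBijective _ hbij
  have hcoe : ∀ i : Fin (k+2), ((e3 i : ↥O) : V) = f^[(i:ℕ)] v := fun _ => rfl
  have hdet : (MdetM O f a b).det = ((MdetM O f a b).submatrix e3 e3).det :=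
    (Matrix.det_submatrix_equiv_self e3 _).symm
  have hsub : (MdetM O f a b).submatrix e3 e3
      = Matrix.of (fun i j : Fin (k+2) =>
          (if j = i then a (f^[(i:ℕ)] v) else 0)
            + (if j = i + 1 then -(b (f^[(i:ℕ)] v)) else 0)) := by
    ext i j
    simp only [Matrix.submatrix_apply, MdetM, Matrix.of_apply, hcoe]
    congr 1
    · by_cases h : j = i
      · subst h; simp
      · rw [if_neg (fun hc => h (hinjval j i hc)), if_neg h]
    · by_cases h : j = i + 1
      · subst h
        rw [if_pos (by rw [hstep i]), if_pos rfl]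
      · rw [if_neg, if_neg h]
        intro hc
        exact h (hinjval j (i+1) (by rw [hstep i]; exact hc))
  have hprodA : ∏ i : Fin (k+2), a (f^[(i:ℕ)] v) = ∏ w ∈ O, a w := by
    rw [← Finset.prod_coe_sort O a, ← Equiv.prod_comp e3 (fun w : ↥O => a ↑w)]
    rfl
  have hprodB : ∏ i : Fin (k+2), b (f^[(i:ℕ)] v) = ∏ w ∈ O, b w := by
    rw [← Finset.prod_coe_sort O b, ← Equiv.prod_comp e3 (fun w : ↥O => b ↑w)]
    rfl
  rw [hdet, hsub, cycleDet, hprodA, hprodB]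

lemma MdetM_split_det (s O : Finset V) (hO : O ⊆ s) (f : V → V) (a b : V → R)
    (h2 : ∀ u ∈ s \ O, f u ∉ O) :
    (MdetM s f a b).det = (MdetM O f a b).det * (MdetM (s \ O) f a b).det := by
  classical
  rw [← Matrix.det_submatrix_equiv_self (finsetSplit s O hO)]
  have heq : (MdetM s f a b).submatrix (finsetSplit s O hO) (finsetSplit s O hO)
      = Matrix.fromBlocks (MdetM O f a b)
          (Matrix.of fun (u : ↥O) (w : ↥(s \ O)) =>
            MdetM s f a b ⟨u, hO u.2⟩ ⟨w, (Finset.mem_sdiff.mp w.2).1⟩)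
          0 (MdetM (s \ O) f a b) := by
    ext iu jw
    rcases iu with u | u <;> rcases jw with w | w
    · rfl
    · rfl
    · show (if ((w : V)) = ((u : V)) then a (u : V) else 0)
          + (if ((w : V)) = f ((u : V)) then -(b (u : V)) else 0) = 0
      rw [if_neg, if_neg]
      · simp
      · intro hc
        exact h2 _ u.2 (hc ▸ w.2)
      · intro hc
        exact (Finset.mem_sdiff.mp u.2).2 (hc ▸ w.2)
    · rfl
  rw [heq, Matrix.det_fromBlocks_zero₂₁]

lemma MdetM_singleton_det (f : V → V) (a b : V → R) (v : V) (hfv : f v ≠ v) :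
    (MdetM ({v} : Finset V) f a b).det = a v := by
  haveI : Unique ↥({v} : Finset V) :=
    ⟨⟨⟨v, Finset.mem_singleton_self v⟩⟩, fun u => Subtype.ext (Finset.mem_singleton.mp u.2)⟩
  rw [Matrix.det_unique]
  have hd : ((default : ↥({v} : Finset V)) : V) = v :=
    Finset.mem_singleton.mp (Subtype.prop _)
  simp only [MdetM, Matrix.of_apply, hd]
  rw [if_true, if_neg (fun h => hfv h.symm), add_zero]

lemma perF_cancel {s : Finset V} {f : V → V} (hmaps : ∀ v ∈ s, f v ∈ s)
    (hinj : Set.InjOn f ↑s) {w : V} (hw : w ∈ s) :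
    ∀ t1 t2, t1 < t2 → f^[t1] w = f^[t2] w → PerF f w := by
  intro t1
  induction t1 with
  | zero => intro t2 h12 heq; exact ⟨t2, by omega, heq.symm⟩
  | succ t1 ih =>
    intro t2 h12 heq
    obtain ⟨t2', rfl⟩ : ∃ t2', t2 = t2' + 1 := ⟨t2 - 1, by omega⟩
    rw [Function.iterate_succ_apply', Function.iterate_succ_apply'] at heq
    exact ih t2' (by omega)
      (hinj (Finset.mem_coe.mpr (iterate_mem hmaps hw t1))
        (Finset.mem_coe.mpr (iterate_mem hmaps hw t2')) heq)

lemma perF_of_injOn {s : Finset V} {f : V → V} (hmaps : ∀ v ∈ s, f v ∈ s)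
    (hinj : Set.InjOn f ↑s) {w : V} (hw : w ∈ s) : PerF f w := by
  obtain ⟨x, y, hxy, heq⟩ := Finite.exists_ne_map_eq_of_infinite
    (fun t : ℕ => (⟨f^[t] w, iterate_mem hmaps hw t⟩ : ↥s))
  have heq' : f^[x] w = f^[y] w := congrArg Subtype.val heq
  rcases lt_or_gt_of_ne hxy with h | h
  · exact perF_cancel hmaps hinj hw x y h heq'
  · exact perF_cancel hmaps hinj hw y x h heq'.symm

lemma exists_not_image {s : Finset V} {f : V → V} (hmaps : ∀ v ∈ s, f v ∈ s)
    {w₀ : V} (hw₀s : w₀ ∈ s) (hnp : ¬ PerF f w₀) :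
    ∃ v ∈ s, ∀ u ∈ s, f u ≠ v := by
  by_contra hc
  push_neg at hc
  have himg : s.image f = s := by
    apply Finset.Subset.antisymm
    · intro u hu
      obtain ⟨w, hw, rfl⟩ := Finset.mem_image.mp hu
      exact hmaps w hw
    · intro u hu
      obtain ⟨w, hw, hwu⟩ := hc u hu
      exact Finset.mem_image.mpr ⟨w, hw, hwu⟩
  have hinj : Set.InjOn f ↑s := Finset.injOn_of_card_image_eq (by rw [himg])
  exact hnp (perF_of_injOn hmaps hinj hw₀s)

lemma not_perF_of_not_image {s : Finset V} {f : V → V} (hmaps : ∀ v ∈ s, f v ∈ s)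
    {v : V} (hv : v ∈ s) (hni : ∀ u ∈ s, f u ≠ v) : ¬ PerF f v := by
  rintro ⟨ℓ, hℓ, hfix⟩
  apply hni (f^[ℓ-1] v) (iterate_mem hmaps hv _)
  rw [← Function.iterate_succ_apply' f (ℓ-1) v]
  have h1 : ℓ - 1 + 1 = ℓ := by omega
  rw [Nat.succ_eq_add_one, h1, hfix]

lemma cyclesF_sdiff_singleton {s : Finset V} {f : V → V} (hmaps : ∀ v ∈ s, f v ∈ s)
    {v : V} (hv : v ∈ s) (hvnp : ¬ PerF f v) (hni : ∀ u ∈ s, f u ≠ v) :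
    cyclesF (s \ {v}) f = cyclesF s f := by
  classical
  have hne_of_per : ∀ {w : V}, PerF f w → w ∈ s → w ≠ v := by
    intro w hw hws hwv
    exact hvnp (hwv ▸ hw)
  have hfilter : (s \ {v}).filter (PerF f) = s.filter (PerF f) := by
    ext u
    simp only [Finset.mem_filter, Finset.mem_sdiff, Finset.mem_singleton]
    constructor
    · rintro ⟨⟨h1, -⟩, h2⟩; exact ⟨h1, h2⟩
    · rintro ⟨h1, h2⟩; exact ⟨⟨h1, hne_of_per h2 h1⟩, h2⟩
  have horb : ∀ w ∈ s.filter (PerF f), orbF (s \ {v}) f w = orbF s f w := by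
    intro w hw
    obtain ⟨hws, hwper⟩ := Finset.mem_filter.mp hw
    ext u
    simp only [mem_orbF_iff, Finset.mem_sdiff, Finset.mem_singleton]
    constructor
    · rintro ⟨⟨h1, -⟩, t, rfl⟩; exact ⟨h1, t, rfl⟩
    · rintro ⟨h1, t, rfl⟩
      refine ⟨⟨h1, ?_⟩, t, rfl⟩
      exact hne_of_per (perF_iterate hwper t) h1
  unfold cyclesF
  rw [hfilter]
  exact Finset.image_congr fun w hw => horb w hw

open Classical in
theorem detLemmaMain : ∀ (s : Finset V) (f : V → V), (∀ v ∈ s, f v ∈ s) → (∀ v ∈ s, f v ≠ v) →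
    ∀ (a b : V → R),
    (MdetM s f a b).det =
      (∏ v ∈ s.filter (fun v => ¬ PerF f v), a v) *
      ∏ O ∈ cyclesF s f, ((∏ w ∈ O, a w) - (∏ w ∈ O, b w)) := by
  intro s
  induction s using Finset.strongInductionOn with
  | _ s ih =>
  intro f hmaps hne a b
  classical
  by_cases hall : ∀ v ∈ s, PerF f v
  · rcases Finset.eq_empty_or_nonempty s with rfl | ⟨v, hv⟩
    · haveI : IsEmpty (↥(∅ : Finset V)) := Finset.isEmpty_coe_sort.mpr rfl
      rw [Matrix.det_isEmpty]
      simp [cyclesF]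
    · have hper := hall v hv
      have hOsub : orbF s f v ⊆ s := orbF_subset
      have hvO : v ∈ orbF s f v := mem_orbF_self hv
      have h2 : ∀ u ∈ s \ orbF s f v, f u ∉ orbF s f v := by
        intro u hu hfu
        exact (Finset.mem_sdiff.mp
          (sdiff_invariant hmaps hv hper hu (hall u (Finset.mem_sdiff.mp hu).1))).2 hfu
      have hmaps' : ∀ u ∈ s \ orbF s f v, f u ∈ s \ orbF s f v := fun u hu =>
        sdiff_invariant hmaps hv hper hu (hall u (Finset.mem_sdiff.mp hu).1)
      have hne' : ∀ u ∈ s \ orbF s f v, f u ≠ u := fun u hu =>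
        hne u (Finset.mem_sdiff.mp hu).1
      have hssub : s \ orbF s f v ⊂ s :=
        Finset.sdiff_ssubset hOsub ⟨v, hvO⟩
      rw [MdetM_split_det s (orbF s f v) hOsub f a b h2,
        cycleBlockDet hmaps hne hv hper a b,
        ih (s \ orbF s f v) hssub f hmaps' hne' a b]
      have hnp1 : s.filter (fun u => ¬ PerF f u) = ∅ :=
        Finset.filter_eq_empty_iff.mpr (fun {u} hu h => h (hall u hu))
      have hnp2 : (s \ orbF s f v).filter (fun u => ¬ PerF f u) = ∅ :=
        Finset.filter_eq_empty_iff.mpr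
          (fun {u} hu h => h (hall u (Finset.mem_sdiff.mp hu).1))
      rw [cyclesF_sdiff_orb hmaps hv hper,
        Finset.prod_insert (orb_not_mem_cyclesF_sdiff hv hper), hnp1, hnp2]
      simp only [Finset.prod_empty, one_mul]
  · push_neg at hall
    obtain ⟨w₀, hw₀s, hw₀⟩ := hall
    obtain ⟨v, hv, hni⟩ := exists_not_image hmaps hw₀s hw₀
    have hvnp : ¬ PerF f v := not_perF_of_not_image hmaps hv hni
    have h2 : ∀ u ∈ s \ {v}, f u ∉ ({v} : Finset V) := by
      intro u hu h
      exact hni u (Finset.mem_sdiff.mp hu).1 (Finset.mem_singleton.mp h)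
    have hmaps' : ∀ u ∈ s \ {v}, f u ∈ s \ {v} := by
      intro u hu
      rw [Finset.mem_sdiff, Finset.mem_singleton]
      exact ⟨hmaps u (Finset.mem_sdiff.mp hu).1, hni u (Finset.mem_sdiff.mp hu).1⟩
    have hne' : ∀ u ∈ s \ {v}, f u ≠ u := fun u hu =>
      hne u (Finset.mem_sdiff.mp hu).1
    have hssub : s \ {v} ⊂ s :=
      Finset.sdiff_ssubset (Finset.singleton_subset_iff.mpr hv)
        ⟨v, Finset.mem_singleton_self v⟩
    rw [MdetM_split_det s {v} (Finset.singleton_subset_iff.mpr hv) f a b h2,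
      MdetM_singleton_det f a b v (hne v hv),
      ih (s \ {v}) hssub f hmaps' hne' a b,
      cyclesF_sdiff_singleton hmaps hv hvnp hni]
    have hfil : s.filter (fun u => ¬ PerF f u)
        = insert v ((s \ {v}).filter (fun u => ¬ PerF f u)) := by
      ext u
      simp only [Finset.mem_filter, Finset.mem_insert, Finset.mem_sdiff, Finset.mem_singleton]
      constructor
      · rintro ⟨hus, hup⟩
        by_cases huv : u = v
        · exact Or.inl huv
        · exact Or.inr ⟨⟨hus, huv⟩, hup⟩
      · rintro (rfl | ⟨⟨hus, -⟩, hup⟩)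
        · exact ⟨hv, hvnp⟩
        · exact ⟨hus, hup⟩
    have hvnotin : v ∉ (s \ {v}).filter (fun u => ¬ PerF f u) := by
      simp
    rw [hfil, Finset.prod_insert hvnotin]
    ring

end Abstract


open MvPolynomial



open Classical in
/-- The set of (exponent vectors of) monic monomials of total degree `dtot` in
`x_1, …, x_n`. -/
noncomputable def vertexSet (n dtot : ℕ) : Finset (Fin n →₀ ℕ) :=
  (Finset.Nat.antidiagonalTuple n dtot).map
    (Finsupp.equivFunOnFinite.symm.toEmbedding)

/-- `leastLabel hn d α` is the least index `i` with `x_i^{d i} ∣ x^α`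
(junk value if there is none). -/
noncomputable def leastLabel {n : ℕ} (hn : 0 < n) (d : Fin n → ℕ) (α : Fin n →₀ ℕ) :
    Fin n :=
  if h : (Finset.univ.filter (fun i => d i ≤ α i)).Nonempty then
    (Finset.univ.filter (fun i => d i ≤ α i)).min' h
  else ⟨0, hn⟩

/-- The step map `σ` of the reduction graph: `α` is sent along its unique outgoing edge,
labeled by the least index `i` with `x_i^{d i} ∣ x^α`, to `m i · x^α / x_i^{d i}`;
sinks are kept fixed. -/
noncomputable def stepFn {n : ℕ} (d : Fin n → ℕ) (m : Fin n → (Fin n →₀ ℕ))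
    (α : Fin n →₀ ℕ) : Fin n →₀ ℕ :=
  if h : (Finset.univ.filter (fun i => d i ≤ α i)).Nonempty then
    α - Finsupp.single ((Finset.univ.filter (fun i => d i ≤ α i)).min' h)
          (d ((Finset.univ.filter (fun i => d i ≤ α i)).min' h))
      + m ((Finset.univ.filter (fun i => d i ≤ α i)).min' h)
  else α

/-- `α` is periodic under the step map `σ`: some positive iterate returns to `α`. -/
def PeriodicPt {n : ℕ} (d : Fin n → ℕ) (m : Fin n → (Fin n →₀ ℕ))
    (α : Fin n →₀ ℕ) : Prop :=
  ∃ ℓ : ℕ, 1 ≤ ℓ ∧ (stepFn d m)^[ℓ] α = α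

open Classical in
/-- The forward `σ`-orbit of a degree-`dtot` monomial, as a subset of the vertices. -/
noncomputable def orbitOf {n : ℕ} (d : Fin n → ℕ) (m : Fin n → (Fin n →₀ ℕ))
    (dtot : ℕ) (α : Fin n →₀ ℕ) : Finset (Fin n →₀ ℕ) :=
  (vertexSet n dtot).filter (fun w => ∃ t : ℕ, (stepFn d m)^[t] α = w)

open Classical in
/-- The set of `σ`-orbits of periodic degree-`dtot` monomials, i.e. the directed cycles
of the reduction graph `G_{B,dtot}`. -/
noncomputable def orbitsSet {n : ℕ} (d : Fin n → ℕ) (m : Fin n → (Fin n →₀ ℕ))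
    (dtot : ℕ) : Finset (Finset (Fin n →₀ ℕ)) :=
  ((vertexSet n dtot).filter (PeriodicPt d m)).image (orbitOf d m dtot)

/-- The generator `f i = a_i x_i^{d i} − b_i m_i`, as a polynomial in `x_1, …, x_n`
over the coefficient ring `A = K[a_1,…,a_n,b_1,…,b_n]` (with `a_i`, `b_i` the
indeterminates `X (.inl i)`, `X (.inr i)`). -/
noncomputable def genPoly (K : Type*) [Field K] {n : ℕ} (d : Fin n → ℕ)
    (m : Fin n → (Fin n →₀ ℕ)) (i : Fin n) :
    MvPolynomial (Fin n) (MvPolynomial (Fin n ⊕ Fin n) K) :=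
  monomial (Finsupp.single i (d i)) (X (Sum.inl i))
    - monomial (m i) (X (Sum.inr i))

open Classical in
/-- The matrix `C` over `A = K[a_1,…,a_n,b_1,…,b_n]`, with rows and columns indexed by
the monic monomials of degree `dtot`, whose `(u,v)` entry is the coefficient of the
monomial `x^v` in `(x^u / x_{i(u)}^{d i(u)}) · f (i(u))`. -/
noncomputable def Cmat (K : Type*) [Field K] {n : ℕ} (hn : 0 < n) (d : Fin n → ℕ)
    (m : Fin n → (Fin n →₀ ℕ)) (dtot : ℕ) :
    Matrix ↥(vertexSet n dtot) ↥(vertexSet n dtot) (MvPolynomial (Fin n ⊕ Fin n) K) :=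
  fun u v => MvPolynomial.coeff (v : Fin n →₀ ℕ)
    ((monomial ((u : Fin n →₀ ℕ)
          - Finsupp.single (leastLabel hn d u) (d (leastLabel hn d u)))
        (1 : MvPolynomial (Fin n ⊕ Fin n) K))
      * genPoly K d m (leastLabel hn d u))

section Concrete

variable {n : ℕ}

lemma mem_vertexSet_iff {dtot : ℕ} {α : Fin n →₀ ℕ} :
    α ∈ vertexSet n dtot ↔ ∑ i, α i = dtot := by
  rw [vertexSet, Finset.mem_map_equiv]
  rw [Finset.Nat.mem_antidiagonalTuple]
  simp [Finsupp.equivFunOnFinite]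

lemma filter_nonempty_of_mem (hn : 0 < n) (d : Fin n → ℕ) (hd : ∀ i, 0 < d i)
    {dtot : ℕ} (hdtot : dtot = (∑ i, d i) - n + 1) {α : Fin n →₀ ℕ}
    (hα : α ∈ vertexSet n dtot) :
    (Finset.univ.filter (fun i => d i ≤ α i)).Nonempty := by
  classical
  by_contra hc
  rw [Finset.not_nonempty_iff_eq_empty, Finset.filter_eq_empty_iff] at hc
  have h1 : ∀ i, α i ≤ d i - 1 := fun i => by
    have := hc (Finset.mem_univ i); omega
  have h2 : ∑ i, α i ≤ ∑ i, (d i - 1) := Finset.sum_le_sum (fun i _ => h1 i)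
  have h3 : ∑ i, d i = ∑ i, (d i - 1) + n := by
    have he : ∀ i ∈ Finset.univ, d i = (d i - 1) + 1 := fun i _ => by
      have := hd i; omega
    rw [Finset.sum_congr rfl he, Finset.sum_add_distrib]
    simp
  have h4 : ∑ i, α i = dtot := mem_vertexSet_iff.mp hα
  have hnle : 1 ≤ n := hn
  omega

lemma leastLabel_le (hn : 0 < n) (d : Fin n → ℕ) {α : Fin n →₀ ℕ}
    (h : (Finset.univ.filter (fun i => d i ≤ α i)).Nonempty) :
    d (leastLabel hn d α) ≤ α (leastLabel hn d α) := by
  rw [leastLabel, dif_pos h]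
  have := Finset.min'_mem _ h
  simpa using this

lemma stepFn_eq (hn : 0 < n) (d : Fin n → ℕ) (m : Fin n → (Fin n →₀ ℕ)) {α : Fin n →₀ ℕ}
    (h : (Finset.univ.filter (fun i => d i ≤ α i)).Nonempty) :
    stepFn d m α
      = α - Finsupp.single (leastLabel hn d α) (d (leastLabel hn d α))
          + m (leastLabel hn d α) := by
  rw [stepFn, dif_pos h, leastLabel, dif_pos h]

lemma sub_single_add_single (hn : 0 < n) (d : Fin n → ℕ) {α : Fin n →₀ ℕ}
    (h : (Finset.univ.filter (fun i => d i ≤ α i)).Nonempty) :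
    α - Finsupp.single (leastLabel hn d α) (d (leastLabel hn d α))
        + Finsupp.single (leastLabel hn d α) (d (leastLabel hn d α)) = α :=
  tsub_add_cancel_of_le (Finsupp.single_le_iff.mpr (leastLabel_le hn d h))

lemma sum_single_eq (i : Fin n) (c : ℕ) : ∑ j, Finsupp.single i c j = c := by
  simp [Finsupp.single_apply]

lemma stepFn_ne (hn : 0 < n) (d : Fin n → ℕ) (m : Fin n → (Fin n →₀ ℕ))
    (hmne : ∀ i, m i ≠ Finsupp.single i (d i)) {α : Fin n →₀ ℕ}
    (h : (Finset.univ.filter (fun i => d i ≤ α i)).Nonempty) :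
    stepFn d m α ≠ α := by
  rw [stepFn_eq hn d m h]
  intro hc
  apply hmne (leastLabel hn d α)
  have h1 := sub_single_add_single hn d h
  apply add_left_cancel (a := α - Finsupp.single (leastLabel hn d α) (d (leastLabel hn d α)))
  rw [hc, h1]

lemma sum_coords_add (β γ : Fin n →₀ ℕ) :
    ∑ j, (β + γ) j = (∑ j, β j) + ∑ j, γ j := by
  simp [Finsupp.add_apply, Finset.sum_add_distrib]

lemma stepFn_mem (hn : 0 < n) (d : Fin n → ℕ) (hd : ∀ i, 0 < d i)
    (m : Fin n → (Fin n →₀ ℕ)) (hmdeg : ∀ i, (∑ j, m i j) = d i)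
    {dtot : ℕ} (hdtot : dtot = (∑ i, d i) - n + 1) {α : Fin n →₀ ℕ}
    (hα : α ∈ vertexSet n dtot) : stepFn d m α ∈ vertexSet n dtot := by
  have h := filter_nonempty_of_mem hn d hd hdtot hα
  rw [mem_vertexSet_iff, stepFn_eq hn d m h, sum_coords_add]
  have h1 : (∑ j, (α - Finsupp.single (leastLabel hn d α) (d (leastLabel hn d α))) j)
      + d (leastLabel hn d α) = ∑ j, α j := by
    have h1 : ∑ j, ((α - Finsupp.single (leastLabel hn d α) (d (leastLabel hn d α)))
        + Finsupp.single (leastLabel hn d α) (d (leastLabel hn d α))) j = ∑ j, α j := by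
      rw [sub_single_add_single hn d h]
    rw [sum_coords_add, sum_single_eq] at h1
    exact h1
  have h2 : ∑ j, α j = dtot := mem_vertexSet_iff.mp hα
  rw [hmdeg]
  omega

open Classical in
lemma Cmat_eq_MdetM (K : Type*) [Field K] {n : ℕ} (hn : 0 < n) (d : Fin n → ℕ)
    (hd : ∀ i, 0 < d i) (m : Fin n → (Fin n →₀ ℕ))
    (dtot : ℕ) (hdtot : dtot = (∑ i, d i) - n + 1) :
    Cmat K hn d m dtot
      = MdetM (vertexSet n dtot) (stepFn d m)
          (fun α => (X (Sum.inl (leastLabel hn d α)) : MvPolynomial (Fin n ⊕ Fin n) K))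
          (fun α => X (Sum.inr (leastLabel hn d α))) := by
  funext u v
  have h := filter_nonempty_of_mem hn d hd hdtot u.2
  have hstep := stepFn_eq hn d m (α := (u : Fin n →₀ ℕ)) h
  simp only [Cmat, genPoly, MdetM, Matrix.of_apply]
  rw [mul_sub, monomial_mul, monomial_mul, one_mul, one_mul,
    sub_single_add_single hn d h, ← hstep, coeff_sub, coeff_monomial, coeff_monomial,
    sub_eq_add_neg]
  congr 1
  · exact if_congr eq_comm rfl rfl
  · rw [apply_ite Neg.neg, neg_zero]
    exact if_congr eq_comm rfl rfl

end Concrete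

open Classical in
/-- in `A = K[a_1,…,a_n,b_1,…,b_n]`, the determinant of the matrix `C`
factors as the product, over all monic degree-`d` monomials `u` that are not periodic
under `σ`, of `a_{i(u)}`, times the product over all `σ`-orbits `O` of periodic
monomials (the directed cycles of `G_{B,d}`) of the cycle polynomial
`∏ i a_i^{r_i(O)} − ∏ i b_i^{r_i(O)}`, where `r_i(O)` is the number of vertices of `O`
with label `i`. Here `d = d_1 + ⋯ + d_n − n + 1`. -/
theorem stmt7 {K : Type*} [Field K] {n : ℕ} (hn : 0 < n)
    (d : Fin n → ℕ) (hd : ∀ i, 0 < d i)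
    (m : Fin n → (Fin n →₀ ℕ))
    (hmdeg : ∀ i, (∑ j, m i j) = d i)
    (hmne : ∀ i, m i ≠ Finsupp.single i (d i))
    (dtot : ℕ) (hdtot : dtot = (∑ i, d i) - n + 1) :
    (Cmat K hn d m dtot).det =
      (∏ u ∈ (vertexSet n dtot).filter (fun u => ¬ PeriodicPt d m u),
        (X (Sum.inl (leastLabel hn d u)) : MvPolynomial (Fin n ⊕ Fin n) K)) *
      ∏ O ∈ orbitsSet d m dtot,
        ((∏ i, (X (Sum.inl i) : MvPolynomial (Fin n ⊕ Fin n) K)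
            ^ (O.filter (fun w => leastLabel hn d w = i)).card)
          - ∏ i, (X (Sum.inr i) : MvPolynomial (Fin n ⊕ Fin n) K)
            ^ (O.filter (fun w => leastLabel hn d w = i)).card) := by
  rw [Cmat_eq_MdetM K hn d hd m dtot hdtot]
  have hmaps : ∀ α ∈ vertexSet n dtot, stepFn d m α ∈ vertexSet n dtot :=
    fun α hα => stepFn_mem hn d hd m hmdeg hdtot hα
  have hne : ∀ α ∈ vertexSet n dtot, stepFn d m α ≠ α :=
    fun α hα => stepFn_ne hn d m hmne (filter_nonempty_of_mem hn d hd hdtot hα)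
  rw [detLemmaMain (vertexSet n dtot) (stepFn d m) hmaps hne]
  have hfilt : (vertexSet n dtot).filter (fun v => ¬ PerF (stepFn d m) v)
      = (vertexSet n dtot).filter (fun u => ¬ PeriodicPt d m u) := by
    apply Finset.filter_congr
    intro u _
    rfl
  have hcyc : cyclesF (vertexSet n dtot) (stepFn d m) = orbitsSet d m dtot := by
    unfold cyclesF orbitsSet
    have h1 : (vertexSet n dtot).filter (PerF (stepFn d m))
        = (vertexSet n dtot).filter (PeriodicPt d m) := by
      apply Finset.filter_congr
      intro u _
      rfl
    rw [h1]
    apply Finset.image_congr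
    intro w _
    unfold orbF orbitOf
    apply Finset.filter_congr
    intro u _
    rfl
  rw [hfilt, hcyc]
  congr 1
  apply Finset.prod_congr rfl
  intro O hO
  congr 1
  · rw [← Finset.prod_fiberwise_of_maps_to
      (fun w (_ : w ∈ O) => Finset.mem_univ (leastLabel hn d w))
      (fun w => (X (Sum.inl (leastLabel hn d w)) : MvPolynomial (Fin n ⊕ Fin n) K))]
    apply Finset.prod_congr rfl
    intro i _
    rw [Finset.prod_congr rfl
      (fun w hw => by rw [(Finset.mem_filter.mp hw).2] :
        ∀ w ∈ O.filter (fun w => leastLabel hn d w = i),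
          (X (Sum.inl (leastLabel hn d w)) : MvPolynomial (Fin n ⊕ Fin n) K)
            = X (Sum.inl i)),
      Finset.prod_const]
  · rw [← Finset.prod_fiberwise_of_maps_to
      (fun w (_ : w ∈ O) => Finset.mem_univ (leastLabel hn d w))
      (fun w => (X (Sum.inr (leastLabel hn d w)) : MvPolynomial (Fin n ⊕ Fin n) K))]
    apply Finset.prod_congr rfl
    intro i _
    rw [Finset.prod_congr rfl
      (fun w hw => by rw [(Finset.mem_filter.mp hw).2] :
        ∀ w ∈ O.filter (fun w => leastLabel hn d w = i),
          (X (Sum.inr (leastLabel hn d w)) : MvPolynomial (Fin n ⊕ Fin n) K)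
            = X (Sum.inr i)),
      Finset.prod_const]
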